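/- The supremum over x > 0 of the function x ↦ cos x - 1 + x²/2 divided by x³ is attained and equals θ₀⁻³(cos θ₀ - 1 + θ₀²/2), where θ₀ is the unique root in [π, 2π] of θ² + 2θ sin θ + 6(cos θ - 1) = 0; in particular sup_{x>0} x⁻³|cos x - 1 + x²/2| < 0.0992. -/

import Mathlib

open Real Finset
open scoped Nat

/-!
With `G x = (cos x - 1 + x²/2) / x³` and `h t = t² + 2 t sin t + 6 (cos t - 1)` one has
`G' x = -h x / (2 x⁴)`. Since `h 0 = 0` and `h` decreases on `[0, π]` and increases on
`[π, 2π]`, `G` increases up to `θ₀` and decreases on `[θ₀, 2π]`; beyond `2π` the crude bound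
`G x ≤ 1 / (2x)` already lies below `G π`. At the root, `G θ₀ = (θ₀ - sin θ₀) / (3 θ₀²)`, a
decreasing function on `[π, 2π]`, and `θ₀ ≥ 3.995` because `h 3.995 < 0`; both numerical facts
follow from the alternating Taylor bounds for `sin` and `cos` on `[0, ∞)`.
-/

theorem monotoneOn_of_forall_hasDerivAt {D : Set ℝ} (hD : Convex ℝ D) {f f' : ℝ → ℝ}
    (hf : ∀ x ∈ D, HasDerivAt f (f' x) x) (hf' : ∀ x ∈ interior D, 0 ≤ f' x) :
    MonotoneOn f D :=
  monotoneOn_of_hasDerivWithinAt_nonneg hD (fun x hx ↦ (hf x hx).continuousAt.continuousWithinAt)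
    (fun x hx ↦ (hf x (interior_subset hx)).hasDerivWithinAt) hf'

theorem antitoneOn_of_forall_hasDerivAt {D : Set ℝ} (hD : Convex ℝ D) {f f' : ℝ → ℝ}
    (hf : ∀ x ∈ D, HasDerivAt f (f' x) x) (hf' : ∀ x ∈ interior D, f' x ≤ 0) :
    AntitoneOn f D :=
  antitoneOn_of_hasDerivWithinAt_nonpos hD (fun x hx ↦ (hf x hx).continuousAt.continuousWithinAt)
    (fun x hx ↦ (hf x (interior_subset hx)).hasDerivWithinAt) hf'

theorem nonneg_of_hasDerivAt_nonneg {f f' : ℝ → ℝ} (hf₀ : f 0 = 0)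
    (hf : ∀ x, 0 ≤ x → HasDerivAt f (f' x) x) (hf' : ∀ x, 0 ≤ x → 0 ≤ f' x) {x : ℝ}
    (hx : 0 ≤ x) : 0 ≤ f x := by
  have hmono : MonotoneOn f (Set.Ici 0) :=
    monotoneOn_of_forall_hasDerivAt (convex_Ici 0) hf fun y hy ↦
      hf' y (interior_subset hy)
  simpa [hf₀] using hmono Set.self_mem_Ici hx hx

noncomputable def sinTaylor (n : ℕ) (x : ℝ) : ℝ :=
  ∑ k ∈ range n, (-1) ^ k * x ^ (2 * k + 1) / ((2 * k + 1)! : ℝ)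

noncomputable def cosTaylor (n : ℕ) (x : ℝ) : ℝ :=
  ∑ k ∈ range n, (-1) ^ k * x ^ (2 * k) / ((2 * k)! : ℝ)

theorem hasDerivAt_pow_succ_div_factorial (m : ℕ) (x : ℝ) :
    HasDerivAt (fun y : ℝ ↦ y ^ (m + 1) / ((m + 1)! : ℝ)) (x ^ m / (m ! : ℝ)) x := by
  refine ((hasDerivAt_pow (m + 1) x).div_const _).congr_deriv ?_
  rw [Nat.factorial_succ, Nat.cast_mul]
  field_simp
  push_cast
  ring

theorem hasDerivAt_sinTaylor (n : ℕ) (x : ℝ) : HasDerivAt (sinTaylor n) (cosTaylor n x) x := by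
  unfold sinTaylor cosTaylor
  refine HasDerivAt.fun_sum fun k _ ↦ ?_
  simpa only [mul_div_assoc] using (hasDerivAt_pow_succ_div_factorial (2 * k) x).const_mul _

theorem hasDerivAt_cosTaylor_succ (n : ℕ) (x : ℝ) :
    HasDerivAt (cosTaylor (n + 1)) (-sinTaylor n x) x := by
  have hsplit : cosTaylor (n + 1) = fun y ↦
      1 - ∑ k ∈ range n, (-1) ^ k * (y ^ (2 * k + 1 + 1) / ((2 * k + 1 + 1)! : ℝ)) := by
    ext y
    rw [cosTaylor, sum_range_succ', add_comm, sub_eq_add_neg, ← sum_neg_distrib]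
    simp only [mul_zero, pow_zero, Nat.factorial_zero, Nat.cast_one, div_one, mul_one]
    congr 1
    refine sum_congr rfl fun k _ ↦ ?_
    rw [pow_succ, show 2 * (k + 1) = 2 * k + 1 + 1 by ring]
    ring
  rw [hsplit]
  refine ((hasDerivAt_const x 1).sub (HasDerivAt.fun_sum fun k _ ↦
    (hasDerivAt_pow_succ_div_factorial (2 * k + 1) x).const_mul _)).congr_deriv ?_
  simp [sinTaylor, mul_div_assoc]

theorem sinTaylor_zero_right (n : ℕ) : sinTaylor n 0 = 0 := by simp [sinTaylor]

theorem cosTaylor_succ_zero_right (n : ℕ) : cosTaylor (n + 1) 0 = 1 := by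
  simp [cosTaylor, sum_range_succ']

theorem sinTaylor_alternating_of_cosTaylor {n : ℕ}
    (hcos : ∀ x, 0 ≤ x → 0 ≤ (-1) ^ n * (cosTaylor (n + 1) x - cos x)) {x : ℝ}
    (hx : 0 ≤ x) :
    0 ≤ (-1) ^ n * (sinTaylor (n + 1) x - sin x) :=
  nonneg_of_hasDerivAt_nonneg (by simp [sinTaylor_zero_right])
    (fun y _ ↦ ((hasDerivAt_sinTaylor (n + 1) y).sub (hasDerivAt_sin y)).const_mul _) hcos hx

theorem cosTaylor_alternating (n : ℕ) {x : ℝ} (hx : 0 ≤ x) :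
    0 ≤ (-1) ^ n * (cosTaylor (n + 1) x - cos x) := by
  induction n generalizing x with
  | zero => simpa [cosTaylor] using cos_le_one x
  | succ n ih =>
    refine nonneg_of_hasDerivAt_nonneg (by simp [cosTaylor_succ_zero_right])
      (fun y _ ↦ ((hasDerivAt_cosTaylor_succ (n + 1) y).sub (hasDerivAt_cos y)).const_mul _)
      (fun y hy ↦ ?_) hx
    have := sinTaylor_alternating_of_cosTaylor (fun y hy ↦ ih hy) hy
    rw [pow_succ]
    linarith

theorem sinTaylor_alternating (n : ℕ) {x : ℝ} (hx : 0 ≤ x) :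
    0 ≤ (-1) ^ n * (sinTaylor (n + 1) x - sin x) :=
  sinTaylor_alternating_of_cosTaylor (fun _ hy ↦ cosTaylor_alternating n hy) hx

theorem mul_cos_le_sin {u : ℝ} (h₀ : 0 ≤ u) (hπ : u ≤ π) : u * cos u ≤ sin u := by
  rcases lt_or_ge u (π / 2) with h | h
  · have hcos : 0 < cos u := cos_pos_of_mem_Ioo ⟨by linarith [pi_pos], h⟩
    have := le_tan h₀ h
    rwa [tan_eq_sin_div_cos, le_div_iff₀ hcos] at this
  · nlinarith [cos_nonpos_of_pi_div_two_le_of_le h (by linarith),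
      sin_nonneg_of_nonneg_of_le_pi h₀ hπ]

noncomputable def cosRatio (x : ℝ) : ℝ := (cos x - 1 + x ^ 2 / 2) / x ^ 3

noncomputable def cosRatioCrit (t : ℝ) : ℝ := t ^ 2 + 2 * t * sin t + 6 * (cos t - 1)

theorem hasDerivAt_cosRatio {x : ℝ} (hx : x ≠ 0) :
    HasDerivAt cosRatio (-cosRatioCrit x / (2 * x ^ 4)) x := by
  have hnum : HasDerivAt (fun y ↦ cos y - 1 + y ^ 2 / 2) (x - sin x) x := by
    refine (((hasDerivAt_cos x).sub_const 1).fun_add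
      ((hasDerivAt_pow 2 x).div_const 2)).congr_deriv ?_
    push_cast
    ring
  refine (hnum.fun_div (hasDerivAt_pow 3 x) (pow_ne_zero 3 hx)).congr_deriv ?_
  rw [cosRatioCrit]
  field_simp
  push_cast
  ring

theorem hasDerivAt_cosRatioCrit (t : ℝ) :
    HasDerivAt cosRatioCrit (2 * t * (1 + cos t) - 4 * sin t) t := by
  refine (((hasDerivAt_pow 2 t).fun_add
    (((hasDerivAt_id' t).const_mul 2).fun_mul (hasDerivAt_sin t))).fun_add
    (((hasDerivAt_cos t).sub_const 1).const_mul 6)).congr_deriv ?_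
  push_cast
  ring

theorem cosRatioCrit_nonpos {t : ℝ} (h₀ : 0 ≤ t) (hπ : t ≤ π) : cosRatioCrit t ≤ 0 := by
  have hanti : AntitoneOn cosRatioCrit (Set.Icc 0 π) := by
    refine antitoneOn_of_forall_hasDerivAt (convex_Icc 0 π)
      (fun s _ ↦ hasDerivAt_cosRatioCrit s) fun s hs ↦ ?_
    rw [interior_Icc] at hs
    -- in half angles the derivative is `8 cos (s/2) ((s/2) cos (s/2) - sin (s/2))`
    have hcos : cos s = 2 * cos (s / 2) ^ 2 - 1 := by
      rw [← cos_two_mul, mul_div_cancel₀ s two_ne_zero]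
    have hsin : sin s = 2 * sin (s / 2) * cos (s / 2) := by
      rw [← sin_two_mul, mul_div_cancel₀ s two_ne_zero]
    have hc : 0 ≤ cos (s / 2) :=
      cos_nonneg_of_mem_Icc ⟨by linarith [pi_pos, hs.1], by linarith [hs.2]⟩
    have := mul_cos_le_sin (u := s / 2) (by linarith [hs.1]) (by linarith [hs.2, pi_pos])
    rw [hcos, hsin]
    nlinarith [mul_nonneg hc (sub_nonneg.mpr this)]
  simpa [cosRatioCrit] using hanti ⟨le_rfl, pi_pos.le⟩ ⟨h₀, hπ⟩ h₀

theorem sin_nonpos_of_mem_Icc_pi_two_pi {t : ℝ} (ht : t ∈ Set.Icc π (2 * π)) :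
    sin t ≤ 0 := by
  rw [← sin_sub_two_pi]
  exact sin_nonpos_of_nonpos_of_neg_pi_le (by linarith [ht.2]) (by linarith [ht.1])

theorem monotoneOn_cosRatioCrit : MonotoneOn cosRatioCrit (Set.Icc π (2 * π)) := by
  refine monotoneOn_of_forall_hasDerivAt (convex_Icc π (2 * π))
    (fun t _ ↦ hasDerivAt_cosRatioCrit t) fun t ht ↦ ?_
  have ht := interior_subset ht
  have ht₀ : 0 ≤ t := by linarith [pi_pos, ht.1]
  nlinarith [sin_nonpos_of_mem_Icc_pi_two_pi ht,
    mul_nonneg ht₀ (by linarith [neg_one_le_cos t] : 0 ≤ 1 + cos t)]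

theorem antitoneOn_sub_sin_div :
    AntitoneOn (fun t ↦ (t - sin t) / (3 * t ^ 2)) (Set.Icc π (2 * π)) := by
  refine antitoneOn_of_forall_hasDerivAt (convex_Icc π (2 * π)) (fun t ht ↦
    ((hasDerivAt_id' t).fun_sub (hasDerivAt_sin t)).fun_div ((hasDerivAt_pow 2 t).const_mul 3)
      (by nlinarith [pi_pos, ht.1])) fun t ht ↦ ?_
  have ht := interior_subset ht
  have ht₀ : 0 ≤ t := by linarith [pi_pos, ht.1]
  refine div_nonpos_of_nonpos_of_nonneg ?_ (by positivity)
  norm_num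
  nlinarith [mul_nonneg ht₀ (neg_nonneg.mpr (sin_nonpos_of_mem_Icc_pi_two_pi ht)),
    mul_nonneg (mul_nonneg ht₀ ht₀) (by linarith [neg_one_le_cos t] : 0 ≤ 1 + cos t)]

theorem cosRatio_eq_of_cosRatioCrit_eq_zero {θ : ℝ} (hθ : θ ≠ 0)
    (hcrit : cosRatioCrit θ = 0) :
    cosRatio θ = (θ - sin θ) / (3 * θ ^ 2) := by
  rw [cosRatioCrit] at hcrit
  rw [cosRatio, div_eq_div_iff (by positivity) (by positivity)]
  linear_combination θ ^ 2 / 2 * hcrit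

theorem cosRatio_le_cosRatio_pi {x : ℝ} (hx : 2 * π ≤ x) : cosRatio x ≤ cosRatio π := by
  have hx₀ : 0 < x := by linarith [pi_pos]
  calc cosRatio x ≤ x ^ 2 / 2 / x ^ 3 := by
        unfold cosRatio; gcongr; linarith [cos_le_one x]
    _ = 1 / (2 * x) := by field_simp
    _ ≤ 1 / (4 * π) := one_div_le_one_div_of_le (by positivity) (by linarith)
    _ ≤ cosRatio π := by
        rw [cosRatio, cos_pi, div_le_div_iff₀ (by positivity) (by positivity)]
        nlinarith [pi_gt_three, pi_pos]

theorem cosRatio_le_of_cosRatioCrit_eq_zero {θ x : ℝ} (hθ : θ ∈ Set.Icc π (2 * π))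
    (hcrit : cosRatioCrit θ = 0) (hx : 0 < x) : cosRatio x ≤ cosRatio θ := by
  have hθ₀ : 0 < θ := by linarith [pi_pos, hθ.1]
  have hmono : MonotoneOn cosRatio (Set.Ioc 0 θ) := by
    refine monotoneOn_of_forall_hasDerivAt (convex_Ioc 0 θ)
      (fun y hy ↦ hasDerivAt_cosRatio hy.1.ne') fun y hy ↦ ?_
    rw [interior_Ioc] at hy
    refine div_nonneg (neg_nonneg.mpr ?_) (by positivity)
    rcases le_total y π with hyπ | hπy
    · exact cosRatioCrit_nonpos hy.1.le hyπ
    · exact hcrit ▸ monotoneOn_cosRatioCrit ⟨hπy, by linarith [hy.2, hθ.2]⟩ hθ hy.2.le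
  have hanti : AntitoneOn cosRatio (Set.Icc θ (2 * π)) := by
    refine antitoneOn_of_forall_hasDerivAt (convex_Icc θ (2 * π))
      (fun y hy ↦ hasDerivAt_cosRatio (by linarith [hy.1])) fun y hy ↦ ?_
    have hy := interior_subset hy
    refine div_nonpos_of_nonpos_of_nonneg (neg_nonpos.mpr ?_) (by positivity)
    exact hcrit ▸ monotoneOn_cosRatioCrit hθ ⟨by linarith [hy.1, hθ.1], hy.2⟩ hy.1
  rcases le_total x θ with hxθ | hθx
  · exact hmono ⟨hx, hxθ⟩ ⟨hθ₀, le_rfl⟩ hxθ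
  rcases le_total x (2 * π) with hx2π | h2πx
  · exact hanti ⟨le_rfl, hθ.2⟩ ⟨hθx, hx2π⟩ hθx
  · exact (cosRatio_le_cosRatio_pi h2πx).trans
      (hmono ⟨pi_pos, hθ.1⟩ ⟨hθ₀, le_rfl⟩ hθ.1)

-- `θ₀ ≈ 3.99590`; at `3.995` Taylor polynomials of degree 15 to 17 are accurate to `5·10⁻⁵`.
theorem cosRatioCrit_3995_neg : cosRatioCrit 3.995 < 0 := by
  have hsin := sinTaylor_alternating 8 (x := 3.995) (by norm_num)
  have hcos := cosTaylor_alternating 8 (x := 3.995) (by norm_num)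
  simp only [sinTaylor, cosTaylor, sum_range_succ, sum_range_zero] at hsin hcos
  norm_num at hsin hcos
  rw [cosRatioCrit]
  linarith

theorem sub_sin_div_3995_lt : (3.995 - sin 3.995) / (3 * 3.995 ^ 2) < (0.0992 : ℝ) := by
  have hsin := sinTaylor_alternating 7 (x := 3.995) (by norm_num)
  simp only [sinTaylor, sum_range_succ, sum_range_zero] at hsin
  norm_num at hsin
  rw [div_lt_iff₀ (by norm_num)]
  linarith

theorem cosRatio_lt_of_cosRatioCrit_eq_zero {θ : ℝ} (hθ : θ ∈ Set.Icc π (2 * π))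
    (hcrit : cosRatioCrit θ = 0) : cosRatio θ < 0.0992 := by
  have h3995 : (3.995 : ℝ) ∈ Set.Icc π (2 * π) :=
    ⟨by linarith [pi_lt_d2], by linarith [pi_gt_three]⟩
  have hθ_ge : (3.995 : ℝ) ≤ θ := by
    by_contra! hlt
    linarith [monotoneOn_cosRatioCrit hθ h3995 hlt.le, cosRatioCrit_3995_neg]
  rw [cosRatio_eq_of_cosRatioCrit_eq_zero (by linarith) hcrit]
  exact (antitoneOn_sub_sin_div h3995 hθ hθ_ge).trans_lt sub_sin_div_3995_lt

theorem stmt_1 (θ₀ : ℝ)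
    (hθ : θ₀ ∈ Set.Icc π (2 * π))
    (hroot : θ₀ ^ 2 + 2 * θ₀ * Real.sin θ₀ + 6 * (Real.cos θ₀ - 1) = 0) :
    IsGreatest {y : ℝ | ∃ x > 0, y = x⁻¹ ^ 3 * |Real.cos x - 1 + x ^ 2 / 2|}
        (θ₀⁻¹ ^ 3 * (Real.cos θ₀ - 1 + θ₀ ^ 2 / 2)) ∧
      θ₀⁻¹ ^ 3 * (Real.cos θ₀ - 1 + θ₀ ^ 2 / 2) < 0.0992 := by
  have hθ₀ : 0 < θ₀ := by linarith [pi_pos, hθ.1]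
  have habs (x : ℝ) : |cos x - 1 + x ^ 2 / 2| = cos x - 1 + x ^ 2 / 2 :=
    abs_of_nonneg (by linarith [one_sub_sq_div_two_le_cos (x := x)])
  have hratio (x : ℝ) : x⁻¹ ^ 3 * (cos x - 1 + x ^ 2 / 2) = cosRatio x := by
    rw [inv_pow, inv_mul_eq_div, cosRatio]
  refine ⟨⟨⟨θ₀, hθ₀, by rw [habs]⟩, ?_⟩, ?_⟩
  · rintro y ⟨x, hx, rfl⟩
    rw [habs, hratio, hratio]
    exact cosRatio_le_of_cosRatioCrit_eq_zero hθ hroot hx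
  · rw [hratio]
    exact cosRatio_lt_of_cosRatioCrit_eq_zero hθ hroot
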